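/- A φ-monotone path γ = (v_0, v_1, …, v_{m+1}) on the cross-polytope ◇^n is coherent if and only if no antipodal pair occurs among its interior vertices; that is, if and only if there is no index j ∈ {1,…,n−1} such that both e_j and −e_j occur among v_1,…,v_m. -/

import Mathlib

open scoped BigOperators

/-- The `i`-th standard basis vector of `ℝ^n`. -/
noncomputable def stdVec (n : ℕ) (i : Fin n) : Fin n → ℝ := Pi.single i 1

/-- The last standard basis vector `e_n` of `ℝ^{n+2}`. -/
noncomputable def lastVec (n : ℕ) : Fin (n + 2) → ℝ := stdVec (n + 2) (Fin.last (n + 1))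

/-- The linear functional `φ(x) = ∑ i, a i * x i`. -/
def phi (n : ℕ) (a : Fin (n + 2) → ℝ) (x : Fin (n + 2) → ℝ) : ℝ := ∑ i, a i * x i

/-- A vertex of the cross-polytope `◇^n`: one of the `2n` points `±e_i`. -/
def IsCPVertex (n : ℕ) (x : Fin n → ℝ) : Prop :=
  ∃ i : Fin n, x = stdVec n i ∨ x = -stdVec n i

/-- The cross-polytope `◇^n = conv{±e_1, …, ±e_n}`. -/
noncomputable def crossPoly (n : ℕ) : Set (Fin n → ℝ) :=
  convexHull ℝ {x | IsCPVertex n x}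

/-- A `φ`-monotone path on `◇^{n+2}`, encoded as the list of its vertices:
it starts at `-e_n`, ends at `e_n`, visits only vertices, is strictly `φ`-increasing,
and consecutive vertices are not antipodal. -/
def IsMonoPath (n : ℕ) (a : Fin (n + 2) → ℝ) (l : List (Fin (n + 2) → ℝ)) : Prop :=
  l.head? = some (-lastVec n) ∧
  l.getLast? = some (lastVec n) ∧
  (∀ v ∈ l, IsCPVertex (n + 2) v) ∧
  l.Chain' (fun u v => phi n a u < phi n a v ∧ v ≠ -u)

/-- A monotone path is combinatorially coherent if no antipodal pair `±e_j`
(`j ∈ {1, …, n-1}`) occurs among its interior vertices. -/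
def CombCoherent (n : ℕ) (l : List (Fin (n + 2) → ℝ)) : Prop :=
  ¬ ∃ j : Fin (n + 1), stdVec (n + 2) j.castSucc ∈ l.tail.dropLast ∧
      -stdVec (n + 2) j.castSucc ∈ l.tail.dropLast

/-- The Billera–Sturmfels point `p(γ)` associated to a monotone path. -/
noncomputable def pathPoint (n : ℕ) (a : Fin (n + 2) → ℝ) (l : List (Fin (n + 2) → ℝ)) :
    Fin (n + 2) → ℝ :=
  ((l.zip l.tail).map fun q =>
    ((phi n a q.2 - phi n a q.1) / (4 * a (Fin.last (n + 1)))) • (q.1 + q.2)).sum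

/-- The monotone path polytope `MPP_φ(◇^{n+2})`. -/
noncomputable def MPP (n : ℕ) (a : Fin (n + 2) → ℝ) : Set (Fin (n + 2) → ℝ) :=
  convexHull ℝ {x | ∃ l, IsMonoPath n a l ∧ x = pathPoint n a l}

open Classical in
/-- The sign vector `σ(γ) ∈ {-1,0,1}^{n+1}` of a monotone path. -/
noncomputable def sigmaVec (n : ℕ) (l : List (Fin (n + 2) → ℝ)) : Fin (n + 1) → ℤ :=
  fun j =>
    if stdVec (n + 2) j.castSucc ∈ l then 1
    else if -stdVec (n + 2) j.castSucc ∈ l then -1 else 0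

/-!
On the vertices `±e_i` the functional `φ` takes the pairwise distinct values `±a_i`, all in
`[-a_n, a_n]`.

If no antipodal pair occurs inside `γ`, take `ψ` linear with `ψ v = φ v ^ 2 - a_n ^ 2` on the
vertices of `γ` and `ψ v ≥ 0` on the others. For an edge `[v_k, v_{k+1}]`, the chord `L_k` of
`s ↦ s ^ 2 - a_n ^ 2` through `φ v_k` and `φ v_{k+1}` satisfies `L_k ∘ φ ≤ ψ` at every vertex,
with equality exactly at `v_k` and `v_{k+1}`: on `γ` because no vertex of `γ` has its `φ`-value
strictly between those of `v_k` and `v_{k+1}`, off `γ` because `L_k < 0` on `(-a_n, a_n)`. Hence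
`ψ - L_k ∘ φ ≥ 0` on `◇^n` with zero set the edge itself, and the edges, which together meet
every fiber of `φ`, are exactly the fiberwise minimizers of `ψ`.

Conversely, if `±e_j` both lie on `γ`, then `ψ (±e_j)` are the minima of `ψ` over the fibers
`φ = ±a_j`, which contain `±y` for `y = (a_j / a_n) e_n`. This forces `ψ y = ψ e_j`, so `y` would
lie on an edge of `γ`; but those edges lie on the boundary `∑ i, |x i| = 1` of `◇^n`.
-/

namespace List

variable {α : Type*}

theorem exists_eq_append_of_mem_zip_tail {l : List α} {q : α × α} (hq : q ∈ l.zip l.tail) :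
    ∃ l₁ l₂, l = l₁ ++ q.1 :: q.2 :: l₂ := by
  induction l with
  | nil => simp at hq
  | cons b r ih =>
    rcases r with _ | ⟨c, r⟩
    · simp at hq
    rw [tail_cons, zip_cons_cons, mem_cons] at hq
    rcases hq with rfl | hq
    · exact ⟨[], r, rfl⟩
    · obtain ⟨l₁, l₂, h⟩ := ih hq
      exact ⟨b :: l₁, l₂, by rw [h, cons_append]⟩

theorem mem_of_mem_zip_tail {l : List α} {q : α × α} (hq : q ∈ l.zip l.tail) :
    q.1 ∈ l ∧ q.2 ∈ l := by
  obtain ⟨l₁, l₂, rfl⟩ := exists_eq_append_of_mem_zip_tail hq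
  simp

theorem exists_mem_zip_tail_snd_eq {l : List α} {u : α} (hu : u ∈ l.tail) :
    ∃ q ∈ l.zip l.tail, q.2 = u := by
  have h : (l.zip l.tail).map Prod.snd = l.tail := map_snd_zip (by simp)
  rw [← h] at hu
  simpa using hu

theorem exists_mem_zip_tail_le_le {β : Type*} [LinearOrder β] (f : α → β) {l : List α}
    {x y : α} {s : β} (hx : l.head? = some x) (hy : l.getLast? = some y) (hxy : x ≠ y)
    (hxs : f x ≤ s) (hsy : s ≤ f y) : ∃ q ∈ l.zip l.tail, f q.1 ≤ s ∧ s ≤ f q.2 := by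
  induction l generalizing x with
  | nil => simp at hx
  | cons b r ih =>
    rw [head?_cons, Option.some_inj] at hx
    subst hx
    rcases r with _ | ⟨c, r⟩
    · simp at hy; exact absurd hy hxy
    rw [tail_cons, zip_cons_cons]
    by_cases hsc : s ≤ f c
    · exact ⟨(b, c), mem_cons_self, hxs, hsc⟩
    · have hcy : c ≠ y := by rintro rfl; exact hsc hsy
      obtain ⟨q, hq, h⟩ := ih rfl (by rwa [getLast?_cons_cons] at hy) hcy (le_of_not_ge hsc)
      exact ⟨q, mem_cons_of_mem _ hq, h⟩

theorem mem_tail_dropLast_of_ne {l : List α} {u x y : α} (hu : u ∈ l)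
    (hx : l.head? = some x) (hy : l.getLast? = some y) (hux : u ≠ x) (huy : u ≠ y) :
    u ∈ l.tail.dropLast := by
  rcases l with _ | ⟨b, r⟩
  · simp at hu
  rw [head?_cons, Option.some_inj] at hx
  subst hx
  have hr : u ∈ r := (mem_cons.mp hu).resolve_left hux
  have hr' : r ≠ [] := ne_nil_of_mem hr
  rw [getLast?_eq_some_getLast (cons_ne_nil b r), getLast_cons hr', Option.some_inj] at hy
  exact mem_dropLast_of_mem_of_ne_getLast hr (hy ▸ huy)

end List

section FiberMinimizers

variable {E : Type*}

def fiberMinimizers (K : Set E) (φ ψ : E → ℝ) : Set E :=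
  {x ∈ K | ∀ y ∈ K, φ y = φ x → ψ x ≤ ψ y}

theorem setOf_exists_mem_eq_fiberMinimizers {ι : Type*} {K : Set E} {φ ψ : E → ℝ}
    {Q : Set ι} {S : ι → Set E} {c r : ι → ℝ}
    (hS : ∀ q ∈ Q, S q = {x ∈ K | ψ x - c q * φ x = r q})
    (hle : ∀ q ∈ Q, ∀ x ∈ K, r q ≤ ψ x - c q * φ x)
    (hcover : ∀ x ∈ K, ∃ q ∈ Q, ∃ p ∈ S q, φ p = φ x) :
    {x | ∃ q ∈ Q, x ∈ S q} = fiberMinimizers K φ ψ := by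
  ext x
  constructor
  · rintro ⟨q, hq, hx⟩
    rw [hS q hq] at hx
    refine ⟨hx.1, fun y hy hφ => ?_⟩
    have := hle q hq y hy
    rw [hφ] at this
    linarith [hx.2]
  · rintro ⟨hxK, hmin⟩
    obtain ⟨q, hq, p, hp, hφ⟩ := hcover x hxK
    rw [hS q hq] at hp
    have := hmin p hp.1 hφ
    refine ⟨q, hq, ?_⟩
    rw [hS q hq]
    refine ⟨hxK, le_antisymm ?_ (hle q hq x hxK)⟩
    rw [← hφ]
    linarith [hp.2]

end FiberMinimizers

section ConvexHull

variable {E : Type*} [AddCommGroup E] [Module ℝ E]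

theorem sep_convexHull_eq_convexHull_sep (f : E →ₗ[ℝ] ℝ) {r : ℝ} {s : Set E}
    (hs : ∀ v ∈ s, r ≤ f v) :
    {x ∈ convexHull ℝ s | f x = r} = convexHull ℝ {v ∈ s | f v = r} := by
  classical
  apply Set.Subset.antisymm
  · rintro _ ⟨hx, hfx⟩
    obtain ⟨ι, _, w, z, hw₀, hw₁, hz, rfl⟩ := mem_convexHull_iff_exists_fintype.mp hx
    have hsum : ∑ i, w i * (f (z i) - r) = 0 := by
      simp only [mul_sub, Finset.sum_sub_distrib, ← Finset.sum_mul, hw₁, one_mul, sub_eq_zero]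
      simpa only [map_sum, map_smul, smul_eq_mul] using hfx
    have hterm := (Finset.sum_eq_zero_iff_of_nonneg fun i _ =>
      mul_nonneg (hw₀ i) (sub_nonneg.mpr (hs _ (hz i)))).mp hsum
    rw [← Finset.centerMass_eq_of_sum_1 _ _ hw₁, ← Finset.centerMass_filter_ne_zero]
    refine Finset.centerMass_mem_convexHull _ (fun i _ => hw₀ i)
      (by rw [Finset.sum_filter_ne_zero, hw₁]; exact one_pos) fun i hi => ⟨hz i, ?_⟩
    have := hterm i (Finset.mem_univ i)
    rw [mul_eq_zero, sub_eq_zero] at this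
    exact this.resolve_left (Finset.mem_filter.mp hi).2
  · exact Set.subset_inter (convexHull_mono fun v hv => hv.1)
      (convexHull_min (fun v hv => hv.2) (convex_hyperplane f.isLinear r))

theorem le_of_mem_convexHull (f : E →ₗ[ℝ] ℝ) {r : ℝ} {s : Set E} (hs : ∀ v ∈ s, r ≤ f v)
    {x : E} (hx : x ∈ convexHull ℝ s) : r ≤ f x :=
  convexHull_min hs (convex_halfSpace_ge f.isLinear r) hx

theorem mem_fiberMinimizers_of_neg (φ ψ : E →ₗ[ℝ] ℝ) {K : Set E} {u y : E}
    (hu : u ∈ fiberMinimizers K φ ψ) (hu' : -u ∈ fiberMinimizers K φ ψ)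
    (hy : y ∈ K) (hy' : -y ∈ K) (hφ : φ y = φ u) : y ∈ fiberMinimizers K φ ψ := by
  have h₁ : ψ u ≤ ψ y := hu.2 y hy hφ
  have h₂ : ψ (-u) ≤ ψ (-y) := hu'.2 (-y) hy' (by simp only [map_neg, hφ])
  rw [map_neg, map_neg, neg_le_neg_iff] at h₂
  exact ⟨hy, fun z hz hφz => (le_antisymm h₂ h₁).trans_le (hu.2 z hz (hφz.trans hφ))⟩

end ConvexHull

section CrossPolytope

variable {m : ℕ}

theorem IsCPVertex.exists_eq_single {x : Fin m → ℝ} (hx : IsCPVertex m x) :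
    ∃ i ε, |ε| = 1 ∧ x = Pi.single i ε := by
  obtain ⟨i, rfl | rfl⟩ := hx
  · exact ⟨i, 1, abs_one, rfl⟩
  · exact ⟨i, -1, by simp, by rw [Pi.single_neg]; rfl⟩

theorem sum_abs_single (i : Fin m) (ε : ℝ) : ∑ j, |(Pi.single i ε : Fin m → ℝ) j| = |ε| := by
  rw [Finset.sum_eq_single i (fun j _ hj => by simp [hj]) (by simp)]
  simp

theorem sum_abs_eq_one_of_mem_segment {u v x : Fin m → ℝ} (hu : IsCPVertex m u)
    (hv : IsCPVertex m v) (huv : u ≠ v) (hvu : v ≠ -u) (hx : x ∈ segment ℝ u v) :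
    ∑ i, |x i| = 1 := by
  obtain ⟨p, ε, hε, rfl⟩ := hu.exists_eq_single
  obtain ⟨r, τ, hτ, rfl⟩ := hv.exists_eq_single
  have hpr : p ≠ r := by
    rintro rfl
    rcases abs_eq_abs.mp (hε.trans hτ.symm) with h | h
    · exact huv (by rw [h])
    · exact hvu (by rw [h, ← Pi.single_neg, neg_neg])
  obtain ⟨α, β, hα, hβ, hαβ, rfl⟩ := hx
  have hcoord : ∀ j, |(α • Pi.single p ε + β • Pi.single r τ : Fin m → ℝ) j| =
      α * |(Pi.single p ε : Fin m → ℝ) j| + β * |(Pi.single r τ : Fin m → ℝ) j| := by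
    intro j
    by_cases hj : j = p
    · subst hj
      simp [hpr, abs_mul, abs_of_nonneg hα]
    · by_cases hjr : j = r
      · subst hjr
        simp [hj, abs_mul, abs_of_nonneg hβ]
      · simp [hj, hjr]
  simp only [hcoord, Finset.sum_add_distrib, ← Finset.mul_sum, sum_abs_single, hε, hτ, mul_one,
    hαβ]

end CrossPolytope

theorem pos_of_monotone {k : ℕ} {a : Fin (k + 1) → ℝ} (ha : Monotone a) (h0 : 0 < a 0)
    (i : Fin (k + 1)) : 0 < a i :=
  h0.trans_le (ha (Fin.zero_le i))

section Phi

variable {n : ℕ} {a : Fin (n + 2) → ℝ}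

noncomputable def phiL (n : ℕ) (a : Fin (n + 2) → ℝ) : (Fin (n + 2) → ℝ) →ₗ[ℝ] ℝ :=
  dotProductBilin ℝ ℝ a

@[simp]
theorem phiL_apply (x : Fin (n + 2) → ℝ) : phiL n a x = phi n a x := rfl

theorem phi_single (i : Fin (n + 2)) (ε : ℝ) : phi n a (Pi.single i ε) = a i * ε :=
  dotProduct_single a ε i

@[simp]
theorem phi_stdVec (i : Fin (n + 2)) : phi n a (stdVec (n + 2) i) = a i := by
  rw [stdVec, phi_single, mul_one]

@[simp]
theorem phi_neg (x : Fin (n + 2) → ℝ) : phi n a (-x) = -phi n a x :=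
  map_neg (phiL n a) x

theorem phi_injOn_vertices (h0 : 0 < a 0) (ha : StrictMono a) {u v : Fin (n + 2) → ℝ}
    (hu : IsCPVertex (n + 2) u) (hv : IsCPVertex (n + 2) v) (h : phi n a u = phi n a v) :
    u = v := by
  obtain ⟨i, ε, hε, rfl⟩ := hu.exists_eq_single
  obtain ⟨j, τ, hτ, rfl⟩ := hv.exists_eq_single
  rw [phi_single, phi_single] at h
  obtain rfl : i = j := ha.injective <| by
    simpa [abs_mul, hε, hτ, abs_of_pos (pos_of_monotone ha.monotone h0 _)] using congrArg abs h
  rw [mul_right_injective₀ (pos_of_monotone ha.monotone h0 i).ne' h]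

theorem abs_phi_le_of_isCPVertex (h0 : 0 < a 0) (ha : StrictMono a) {u : Fin (n + 2) → ℝ}
    (hu : IsCPVertex (n + 2) u) : |phi n a u| ≤ a (Fin.last (n + 1)) := by
  obtain ⟨i, ε, hε, rfl⟩ := hu.exists_eq_single
  rw [phi_single, abs_mul, hε, mul_one, abs_of_pos (pos_of_monotone ha.monotone h0 i)]
  exact ha.monotone (Fin.le_last i)

theorem abs_phi_le_of_mem_crossPoly (h0 : 0 < a 0) (ha : StrictMono a) {x : Fin (n + 2) → ℝ}
    (hx : x ∈ crossPoly (n + 2)) : |phi n a x| ≤ a (Fin.last (n + 1)) := by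
  have hbound : ∀ v ∈ {v | IsCPVertex (n + 2) v},
      -a (Fin.last (n + 1)) ≤ phi n a v ∧ phi n a v ≤ a (Fin.last (n + 1)) := fun v hv =>
    abs_le.mp (abs_phi_le_of_isCPVertex h0 ha hv)
  refine abs_le.mpr ⟨?_, ?_⟩
  · exact le_of_mem_convexHull (phiL n a) (fun v hv => (hbound v hv).1) hx
  · simpa using le_of_mem_convexHull (-phiL n a) (r := -a (Fin.last (n + 1)))
      (fun v hv => by simpa using (hbound v hv).2) hx

end Phi

theorem isCPVertex_lastVec {n : ℕ} : IsCPVertex (n + 2) (lastVec n) := ⟨_, Or.inl rfl⟩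

theorem isCPVertex_neg_lastVec {n : ℕ} : IsCPVertex (n + 2) (-lastVec n) := ⟨_, Or.inr rfl⟩

theorem smul_lastVec_mem_crossPoly {n : ℕ} {s : ℝ} (hs : |s| ≤ 1) :
    s • lastVec n ∈ crossPoly (n + 2) := by
  obtain ⟨hs₁, hs₂⟩ := abs_le.mp hs
  refine segment_subset_convexHull (s := {x | IsCPVertex (n + 2) x}) isCPVertex_neg_lastVec
    isCPVertex_lastVec ⟨(1 - s) / 2, (1 + s) / 2, by linarith, by linarith, by ring, ?_⟩
  rw [smul_neg, neg_add_eq_sub, ← sub_smul]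
  congr 1
  ring

namespace IsMonoPath

variable {n : ℕ} {a : Fin (n + 2) → ℝ} {l : List (Fin (n + 2) → ℝ)}

theorem lastVec_mem (hl : IsMonoPath n a l) : lastVec n ∈ l := List.mem_of_mem_getLast? hl.2.1

theorem neg_lastVec_mem (hl : IsMonoPath n a l) : -lastVec n ∈ l := List.mem_of_mem_head? hl.1

theorem isCPVertex_of_mem_zip (hl : IsMonoPath n a l) {q : (Fin (n + 2) → ℝ) × (Fin (n + 2) → ℝ)}
    (hq : q ∈ l.zip l.tail) : IsCPVertex (n + 2) q.1 ∧ IsCPVertex (n + 2) q.2 := by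
  obtain ⟨h₁, h₂⟩ := List.mem_of_mem_zip_tail hq
  exact ⟨hl.2.2.1 _ h₁, hl.2.2.1 _ h₂⟩

theorem phi_lt_of_mem_zip (hl : IsMonoPath n a l) {q : (Fin (n + 2) → ℝ) × (Fin (n + 2) → ℝ)}
    (hq : q ∈ l.zip l.tail) : phi n a q.1 < phi n a q.2 ∧ q.2 ≠ -q.1 := by
  obtain ⟨l₁, l₂, hl₁₂⟩ := List.exists_eq_append_of_mem_zip_tail hq
  exact List.isChain_iff_forall_rel_of_append_cons_cons.mp hl.2.2.2 hl₁₂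

theorem phi_le_or_le (hl : IsMonoPath n a l) {q : (Fin (n + 2) → ℝ) × (Fin (n + 2) → ℝ)}
    (hq : q ∈ l.zip l.tail) {u : Fin (n + 2) → ℝ} (hu : u ∈ l) :
    phi n a u ≤ phi n a q.1 ∨ phi n a q.2 ≤ phi n a u := by
  obtain ⟨l₁, l₂, hl₁₂⟩ := List.exists_eq_append_of_mem_zip_tail hq
  have hsorted : l.Pairwise (fun u v => phi n a u < phi n a v) := List.pairwise_map.mp <|
    ((List.isChain_map _).mpr (hl.2.2.2.imp fun _ _ h => h.1)).pairwise
  rw [hl₁₂] at hsorted hu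
  simp only [List.pairwise_append, List.pairwise_cons, List.mem_append,
    List.mem_cons] at hsorted hu
  rcases hu with hu | rfl | rfl | hu
  · exact Or.inl (hsorted.2.2 _ hu _ (Or.inl rfl)).le
  · exact Or.inl le_rfl
  · exact Or.inr le_rfl
  · exact Or.inr (hsorted.2.1.2.1 _ hu).le

-- The edge from `-e_n` to `e_n` would join antipodal vertices.
theorem neg_last_lt_or_lt_last_of_mem_zip (h0 : 0 < a 0) (ha : StrictMono a)
    (hl : IsMonoPath n a l) {q : (Fin (n + 2) → ℝ) × (Fin (n + 2) → ℝ)}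
    (hq : q ∈ l.zip l.tail) :
    -a (Fin.last (n + 1)) < phi n a q.1 ∨ phi n a q.2 < a (Fin.last (n + 1)) := by
  obtain ⟨hq₁, hq₂⟩ := hl.isCPVertex_of_mem_zip hq
  by_contra! h
  have h₁ : q.1 = -lastVec n := phi_injOn_vertices h0 ha hq₁ isCPVertex_neg_lastVec <| by
    simp [lastVec]; linarith [(abs_le.mp (abs_phi_le_of_isCPVertex h0 ha hq₁)).1]
  have h₂ : q.2 = lastVec n := phi_injOn_vertices h0 ha hq₂ isCPVertex_lastVec <| by
    simp [lastVec]; linarith [(abs_le.mp (abs_phi_le_of_isCPVertex h0 ha hq₂)).2]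
  exact (hl.phi_lt_of_mem_zip hq).2 (by rw [h₁, h₂, neg_neg])

theorem abs_phi_lt_of_not_mem (h0 : 0 < a 0) (ha : StrictMono a) (hl : IsMonoPath n a l)
    {u : Fin (n + 2) → ℝ} (hu : IsCPVertex (n + 2) u) (hnot : u ∉ l) :
    |phi n a u| < a (Fin.last (n + 1)) := by
  refine (abs_phi_le_of_isCPVertex h0 ha hu).lt_of_ne fun h => ?_
  rcases abs_eq (pos_of_monotone ha.monotone h0 _).le |>.mp h with h | h
  · exact hnot <| phi_injOn_vertices h0 ha hu isCPVertex_lastVec (by simp [h, lastVec]) ▸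
      hl.lastVec_mem
  · exact hnot <| phi_injOn_vertices h0 ha hu isCPVertex_neg_lastVec (by simp [h, lastVec]) ▸
      hl.neg_lastVec_mem

theorem mem_tail_dropLast_of_abs_phi_lt (hl : IsMonoPath n a l) {u : Fin (n + 2) → ℝ}
    (hu : u ∈ l) (hφ : |phi n a u| < a (Fin.last (n + 1))) : u ∈ l.tail.dropLast := by
  obtain ⟨h₁, h₂⟩ := abs_lt.mp hφ
  exact List.mem_tail_dropLast_of_ne hu hl.1 hl.2.1 (by rintro rfl; simp [lastVec] at h₁)
    (by rintro rfl; simp [lastVec] at h₂)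

theorem eq_last_of_mem_of_neg_mem (h0 : 0 < a 0) (ha : StrictMono a) (hl : IsMonoPath n a l)
    (hc : CombCoherent n l) {i : Fin (n + 2)} (hp : stdVec (n + 2) i ∈ l)
    (hm : -stdVec (n + 2) i ∈ l) : i = Fin.last (n + 1) := by
  by_contra hi
  obtain ⟨j, rfl⟩ := Fin.exists_castSucc_eq.mpr hi
  have hφ : |phi n a (stdVec (n + 2) j.castSucc)| < a (Fin.last (n + 1)) := by
    rw [phi_stdVec, abs_of_pos (pos_of_monotone ha.monotone h0 _)]
    exact ha (Fin.castSucc_lt_last j)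
  exact hc ⟨j, hl.mem_tail_dropLast_of_abs_phi_lt hp hφ,
    hl.mem_tail_dropLast_of_abs_phi_lt hm (by rwa [phi_neg, abs_neg])⟩

end IsMonoPath

section Psi

variable {n : ℕ} {a : Fin (n + 2) → ℝ} {l : List (Fin (n + 2) → ℝ)}

open Classical in
noncomputable def psiCoeff (n : ℕ) (a : Fin (n + 2) → ℝ) (l : List (Fin (n + 2) → ℝ)) :
    Fin (n + 2) → ℝ :=
  fun i => if stdVec (n + 2) i ∈ l then a i ^ 2 - a (Fin.last (n + 1)) ^ 2
    else if -stdVec (n + 2) i ∈ l then a (Fin.last (n + 1)) ^ 2 - a i ^ 2 else 0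

noncomputable def psi (n : ℕ) (a : Fin (n + 2) → ℝ) (l : List (Fin (n + 2) → ℝ)) :
    (Fin (n + 2) → ℝ) →ₗ[ℝ] ℝ :=
  dotProductBilin ℝ ℝ (psiCoeff n a l)

theorem psi_stdVec (i : Fin (n + 2)) : psi n a l (stdVec (n + 2) i) = psiCoeff n a l i := by
  rw [psi, dotProductBilin_apply_apply, stdVec, dotProduct_single, mul_one]

theorem psi_of_mem (h0 : 0 < a 0) (ha : StrictMono a) (hl : IsMonoPath n a l)
    (hc : CombCoherent n l) {u : Fin (n + 2) → ℝ} (hu : u ∈ l) :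
    psi n a l u = phi n a u ^ 2 - a (Fin.last (n + 1)) ^ 2 := by
  obtain ⟨i, rfl | rfl⟩ := hl.2.2.1 u hu
  · simp [psi_stdVec, psiCoeff, hu]
  · by_cases hp : stdVec (n + 2) i ∈ l
    · obtain rfl := hl.eq_last_of_mem_of_neg_mem h0 ha hc hp hu
      simp [psi_stdVec, psiCoeff, hp]
    · simp [psi_stdVec, psiCoeff, hp, hu]

theorem psi_nonneg_of_not_mem (h0 : 0 < a 0) (ha : StrictMono a) {u : Fin (n + 2) → ℝ}
    (hu : IsCPVertex (n + 2) u) (hnot : u ∉ l) : 0 ≤ psi n a l u := by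
  obtain ⟨i, rfl | rfl⟩ := hu
  all_goals
    have hsq : a i ^ 2 ≤ a (Fin.last (n + 1)) ^ 2 := pow_le_pow_left₀
      (pos_of_monotone ha.monotone h0 i).le (ha.monotone (Fin.le_last i)) 2
    simp only [map_neg, psi_stdVec, psiCoeff, if_neg hnot]
    split_ifs <;> linarith

end Psi

-- `s ↦ (t₁ + t₂) * s - (t₁ * t₂ + A ^ 2)` is affine, with values `-(A + t₁) * (A + t₂)` at `-A`
-- and `-(A - t₁) * (A - t₂)` at `A`.
theorem chord_neg {A t₁ t₂ s : ℝ} (h₁ : -A ≤ t₁) (h₁₂ : t₁ ≤ t₂) (h₂ : t₂ ≤ A)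
    (hne : -A < t₁ ∨ t₂ < A) (hs : |s| < A) : (t₁ + t₂) * s - (t₁ * t₂ + A ^ 2) < 0 := by
  obtain ⟨hs₁, hs₂⟩ := abs_lt.mp hs
  rcases hne with h | h
  · nlinarith [mul_pos (by linarith : (0:ℝ) < A - s)
        (mul_pos (by linarith : (0:ℝ) < A + t₁) (by linarith : (0:ℝ) < A + t₂)),
      mul_nonneg (by linarith : (0:ℝ) ≤ A + s)
        (mul_nonneg (by linarith : (0:ℝ) ≤ A - t₁) (by linarith : (0:ℝ) ≤ A - t₂))]
  · nlinarith [mul_pos (by linarith : (0:ℝ) < A + s)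
        (mul_pos (by linarith : (0:ℝ) < A - t₁) (by linarith : (0:ℝ) < A - t₂)),
      mul_nonneg (by linarith : (0:ℝ) ≤ A - s)
        (mul_nonneg (by linarith : (0:ℝ) ≤ A + t₁) (by linarith : (0:ℝ) ≤ A + t₂))]

section Coherence

variable {n : ℕ} {a : Fin (n + 2) → ℝ} {l : List (Fin (n + 2) → ℝ)}
  {q : (Fin (n + 2) → ℝ) × (Fin (n + 2) → ℝ)}

/-- `(φ q.1 + φ q.2) * s - (φ q.1 * φ q.2 + a_n ^ 2)` is the chord of `s ↦ s ^ 2 - a_n ^ 2` over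
the edge `q`. -/
theorem chord_le_psi_of_isCPVertex (h0 : 0 < a 0) (ha : StrictMono a) (hl : IsMonoPath n a l)
    (hc : CombCoherent n l) (hq : q ∈ l.zip l.tail) {u : Fin (n + 2) → ℝ}
    (hu : IsCPVertex (n + 2) u) :
    -(phi n a q.1 * phi n a q.2 + a (Fin.last (n + 1)) ^ 2) ≤
        psi n a l u - (phi n a q.1 + phi n a q.2) * phi n a u ∧
      (psi n a l u - (phi n a q.1 + phi n a q.2) * phi n a u =
        -(phi n a q.1 * phi n a q.2 + a (Fin.last (n + 1)) ^ 2) ↔ u = q.1 ∨ u = q.2) := by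
  obtain ⟨hq₁, hq₂⟩ := hl.isCPVertex_of_mem_zip hq
  obtain ⟨hlt, hanti⟩ := hl.phi_lt_of_mem_zip hq
  by_cases hul : u ∈ l
  · rw [psi_of_mem h0 ha hl hc hul]
    have hprod : 0 ≤ (phi n a u - phi n a q.1) * (phi n a u - phi n a q.2) := by
      rcases hl.phi_le_or_le hq hul with h | h <;> nlinarith
    refine ⟨by nlinarith, fun heq => ?_, fun heq => ?_⟩
    · have hzero : (phi n a u - phi n a q.1) * (phi n a u - phi n a q.2) = 0 := by linarith
      rcases mul_eq_zero.mp hzero with h | h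
      · exact Or.inl (phi_injOn_vertices h0 ha hu hq₁ (by linarith))
      · exact Or.inr (phi_injOn_vertices h0 ha hu hq₂ (by linarith))
    · rcases heq with rfl | rfl <;> ring
  · have hbound₁ := abs_le.mp (abs_phi_le_of_isCPVertex h0 ha hq₁)
    have hbound₂ := abs_le.mp (abs_phi_le_of_isCPVertex h0 ha hq₂)
    have hchord := chord_neg hbound₁.1 hlt.le hbound₂.2
      (hl.neg_last_lt_or_lt_last_of_mem_zip h0 ha hq)
      (hl.abs_phi_lt_of_not_mem h0 ha hu hul)
    have hψ := psi_nonneg_of_not_mem h0 ha (l := l) hu hul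
    obtain ⟨hm₁, hm₂⟩ := List.mem_of_mem_zip_tail hq
    refine ⟨by linarith, fun heq => by linarith, ?_⟩
    rintro (rfl | rfl) <;> contradiction

theorem chord_le_psi_of_mem_crossPoly (h0 : 0 < a 0) (ha : StrictMono a) (hl : IsMonoPath n a l)
    (hc : CombCoherent n l) (hq : q ∈ l.zip l.tail) {x : Fin (n + 2) → ℝ}
    (hx : x ∈ crossPoly (n + 2)) :
    -(phi n a q.1 * phi n a q.2 + a (Fin.last (n + 1)) ^ 2) ≤
      psi n a l x - (phi n a q.1 + phi n a q.2) * phi n a x := by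
  simpa only [LinearMap.sub_apply, LinearMap.smul_apply, phiL_apply, smul_eq_mul] using
    le_of_mem_convexHull (psi n a l - (phi n a q.1 + phi n a q.2) • phiL n a)
      (r := -(phi n a q.1 * phi n a q.2 + a (Fin.last (n + 1)) ^ 2))
      (fun v hv => (chord_le_psi_of_isCPVertex h0 ha hl hc hq hv).1) hx

theorem setOf_chord_eq_psi_eq_segment (h0 : 0 < a 0) (ha : StrictMono a)
    (hl : IsMonoPath n a l) (hc : CombCoherent n l) (hq : q ∈ l.zip l.tail) :
    {x ∈ crossPoly (n + 2) | psi n a l x - (phi n a q.1 + phi n a q.2) * phi n a x =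
      -(phi n a q.1 * phi n a q.2 + a (Fin.last (n + 1)) ^ 2)} = segment ℝ q.1 q.2 := by
  have hface := sep_convexHull_eq_convexHull_sep
    (psi n a l - (phi n a q.1 + phi n a q.2) • phiL n a) (s := {v | IsCPVertex (n + 2) v})
    (r := -(phi n a q.1 * phi n a q.2 + a (Fin.last (n + 1)) ^ 2))
    (fun v hv => (chord_le_psi_of_isCPVertex h0 ha hl hc hq hv).1)
  have hvert : {v ∈ {v | IsCPVertex (n + 2) v} |
      psi n a l v - (phi n a q.1 + phi n a q.2) * phi n a v =
        -(phi n a q.1 * phi n a q.2 + a (Fin.last (n + 1)) ^ 2)} = {q.1, q.2} := by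
    obtain ⟨hq₁, hq₂⟩ := hl.isCPVertex_of_mem_zip hq
    ext v
    simp only [Set.mem_insert_iff, Set.mem_singleton_iff]
    refine ⟨fun hv => (chord_le_psi_of_isCPVertex h0 ha hl hc hq hv.1).2.mp hv.2, ?_⟩
    rintro (rfl | rfl)
    · exact ⟨hq₁, (chord_le_psi_of_isCPVertex h0 ha hl hc hq hq₁).2.mpr (Or.inl rfl)⟩
    · exact ⟨hq₂, (chord_le_psi_of_isCPVertex h0 ha hl hc hq hq₂).2.mpr (Or.inr rfl)⟩
  simp only [LinearMap.sub_apply, LinearMap.smul_apply, phiL_apply, smul_eq_mul] at hface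
  rw [crossPoly, hface, hvert, convexHull_pair]

theorem IsMonoPath.exists_mem_segment_phi_eq (h0 : 0 < a 0) (ha : StrictMono a)
    (hl : IsMonoPath n a l) {x : Fin (n + 2) → ℝ} (hx : x ∈ crossPoly (n + 2)) :
    ∃ q ∈ l.zip l.tail, ∃ p ∈ segment ℝ q.1 q.2, phi n a p = phi n a x := by
  have hA : 0 < a (Fin.last (n + 1)) := pos_of_monotone ha.monotone h0 _
  obtain ⟨hx₁, hx₂⟩ := abs_le.mp (abs_phi_le_of_mem_crossPoly h0 ha hx)
  obtain ⟨q, hq, hq₁, hq₂⟩ := List.exists_mem_zip_tail_le_le (phi n a) hl.1 hl.2.1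
    (fun h => by have := congrArg (phi n a) h; simp [lastVec] at this; linarith)
    (by simpa [lastVec] using hx₁) (by simpa [lastVec] using hx₂)
  have himage := image_segment ℝ (phiL n a).toAffineMap q.1 q.2
  simp only [LinearMap.coe_toAffineMap, phiL_apply] at himage
  have hmem : phi n a x ∈ phiL n a '' segment ℝ q.1 q.2 := by
    rw [himage, segment_eq_Icc (hq₁.trans hq₂)]
    exact ⟨hq₁, hq₂⟩
  obtain ⟨p, hp, hφ⟩ := hmem
  exact ⟨q, hq, p, hp, hφ⟩

theorem coherent_of_combCoherent (h0 : 0 < a 0) (ha : StrictMono a) (hl : IsMonoPath n a l)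
    (hc : CombCoherent n l) :
    {x | ∃ q ∈ l.zip l.tail, x ∈ segment ℝ q.1 q.2} =
      fiberMinimizers (crossPoly (n + 2)) (phi n a) (psi n a l) :=
  setOf_exists_mem_eq_fiberMinimizers (Q := {q | q ∈ l.zip l.tail})
    (fun _ hq => (setOf_chord_eq_psi_eq_segment h0 ha hl hc hq).symm)
    (fun _ hq _ hx => chord_le_psi_of_mem_crossPoly h0 ha hl hc hq hx)
    (fun _ hx => hl.exists_mem_segment_phi_eq h0 ha hx)

theorem combCoherent_of_coherent (h0 : 0 < a 0) (ha : StrictMono a) (hl : IsMonoPath n a l)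
    (ψ : (Fin (n + 2) → ℝ) →ₗ[ℝ] ℝ)
    (hψ : {x | ∃ q ∈ l.zip l.tail, x ∈ segment ℝ q.1 q.2} =
      fiberMinimizers (crossPoly (n + 2)) (phi n a) ψ) :
    CombCoherent n l := by
  rintro ⟨j, hpos, hneg⟩
  have hA : 0 < a (Fin.last (n + 1)) := pos_of_monotone ha.monotone h0 _
  have haj : 0 < a j.castSucc := pos_of_monotone ha.monotone h0 _
  set t := a j.castSucc / a (Fin.last (n + 1))
  have ht₀ : 0 < t := div_pos haj hA
  have ht₁ : t < 1 := (div_lt_one hA).mpr (ha (Fin.castSucc_lt_last j))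
  have ht : |t| ≤ 1 := by rw [abs_of_pos ht₀]; exact ht₁.le
  have hpath : ∀ u ∈ l.tail, u ∈ fiberMinimizers (crossPoly (n + 2)) (phi n a) ψ := by
    intro u hu
    obtain ⟨q, hq, rfl⟩ := List.exists_mem_zip_tail_snd_eq hu
    exact hψ ▸ ⟨q, hq, right_mem_segment ℝ q.1 q.2⟩
  have hy : t • lastVec n ∈ fiberMinimizers (crossPoly (n + 2)) (phi n a) ψ :=
    mem_fiberMinimizers_of_neg (phiL n a) ψ
      (hpath _ (List.mem_of_mem_dropLast hpos)) (hpath _ (List.mem_of_mem_dropLast hneg))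
      (smul_lastVec_mem_crossPoly ht)
      (by rw [← neg_smul]; exact smul_lastVec_mem_crossPoly (by rwa [abs_neg]))
      (by simp [t, lastVec, hA.ne'])
  rw [← hψ] at hy
  obtain ⟨q, hq, hyq⟩ := hy
  obtain ⟨hq₁, hq₂⟩ := hl.isCPVertex_of_mem_zip hq
  obtain ⟨hlt, hanti⟩ := hl.phi_lt_of_mem_zip hq
  have hnorm := sum_abs_eq_one_of_mem_segment hq₁ hq₂ (fun h => hlt.ne (by rw [h])) hanti hyq
  rw [lastVec, stdVec, ← Pi.single_smul', sum_abs_single, smul_eq_mul, mul_one,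
    abs_of_pos ht₀] at hnorm
  exact ht₁.ne hnorm

end Coherence

/-- A `φ`-monotone path on the cross-polytope `◇^{n+2}` is coherent
(i.e. there is a linear functional `ψ` such that the union of the segments of the path
is exactly the set of `ψ`-minimal points of the fibers of `φ` over the cross-polytope)
if and only if no antipodal pair `±e_j`, `j ∈ {1,…,n-1}`, occurs among its interior
vertices. -/
theorem monotone_path_coherent_iff (n : ℕ) (a : Fin (n + 2) → ℝ)
    (h0 : 0 < a 0) (ha : StrictMono a)
    (l : List (Fin (n + 2) → ℝ)) (hl : IsMonoPath n a l) :
    (∃ ψ : (Fin (n + 2) → ℝ) →ₗ[ℝ] ℝ,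
      {x | ∃ q ∈ l.zip l.tail, x ∈ segment ℝ q.1 q.2} =
        {x ∈ crossPoly (n + 2) |
          ∀ y ∈ crossPoly (n + 2), phi n a y = phi n a x → ψ x ≤ ψ y}) ↔
      CombCoherent n l :=
  ⟨fun ⟨ψ, hψ⟩ => combCoherent_of_coherent h0 ha hl ψ hψ,
    fun hc => ⟨psi n a l, coherent_of_combCoherent h0 ha hl hc⟩⟩
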